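/- Let B be a category with an initial object b, and let p : E ⥤ B be a Grothendieck opfibration. Then evaluation at b induces an equivalence of categories between the category of cocartesian sections of p (sections σ : B ⥤ E of p such that σ sends every morphism of B to a p-cocartesian morphism, with morphisms the vertical natural transformations) and the fiber category of p over b. -/

import Mathlib

open CategoryTheory

universe v₁ v₂ u₁ u₂

variable {E : Type u₁} {B : Type u₂} [Category.{v₁} E] [Category.{v₂} B]

/-- `φ : x ⟶ y` is `p`-cocartesian over `f : p.obj x ⟶ p.obj y`: it lies over `f`, and any
morphism out of `x` lying over `f ≫ g` factors uniquely through `φ` by a morphism over `g`. -/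
def IsCocartesian (p : E ⥤ B) {x y : E} (f : p.obj x ⟶ p.obj y) (φ : x ⟶ y) : Prop :=
  p.map φ = f ∧ ∀ {z : E} (g : p.obj y ⟶ p.obj z) (χ : x ⟶ z),
    p.map χ = f ≫ g → ∃! ψ : y ⟶ z, p.map ψ = g ∧ χ = φ ≫ ψ

/-- `p` is a Grothendieck opfibration: every morphism out of the image of an object admits a
cocartesian lift. -/
def IsOpfibration (p : E ⥤ B) : Prop :=
  ∀ (x : E) (b : B) (u : p.obj x ⟶ b), ∃ (y : E) (e : p.obj y = b) (φ : x ⟶ y),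
    IsCocartesian p (u ≫ eqToHom e.symm) φ

/-- The fiber of `p` over `b`: objects of `E` lying over `b` with vertical morphisms. -/
def Fib (p : E ⥤ B) (b : B) := {e : E // p.obj e = b}

instance fibCategory (p : E ⥤ B) (b : B) : Category (Fib p b) where
  Hom x y := {f : x.1 ⟶ y.1 // p.map f = eqToHom (x.2.trans y.2.symm)}
  id x := ⟨𝟙 x.1, by simp⟩
  comp f g := ⟨f.1 ≫ g.1, by simp [f.2, g.2]⟩
  id_comp f := by apply Subtype.ext; simp
  comp_id f := by apply Subtype.ext; simp
  assoc f g h := by apply Subtype.ext; simp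

/-- A cocartesian section of `p`: a (strict) section sending every morphism of `B` to a
`p`-cocartesian morphism. -/
structure CocartSection (p : E ⥤ B) where
  σ : B ⥤ E
  sec : σ ⋙ p = 𝟭 B
  cocart : ∀ {x y : B} (u : x ⟶ y),
    IsCocartesian p
      (eqToHom (Functor.congr_obj sec x) ≫ u ≫ eqToHom (Functor.congr_obj sec y).symm)
      (σ.map u)

instance cocartSectionCategory (p : E ⥤ B) : Category (CocartSection p) where
  Hom S T := {η : S.σ ⟶ T.σ // ∀ x : B, p.map (η.app x) =
    eqToHom ((Functor.congr_obj S.sec x).trans (Functor.congr_obj T.sec x).symm)}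
  id S := ⟨𝟙 S.σ, by intro x; simp⟩
  comp f g := ⟨f.1 ≫ g.1, by intro x; simp [f.2, g.2]⟩
  id_comp f := by apply Subtype.ext; simp
  comp_id f := by apply Subtype.ext; simp
  assoc f g h := by apply Subtype.ext; simp

/-- Evaluation of cocartesian sections at `b`. -/
def evalAt (p : E ⥤ B) (b : B) : CocartSection p ⥤ Fib p b where
  obj S := ⟨S.σ.obj b, Functor.congr_obj S.sec b⟩
  map {S T} η := ⟨η.1.app b, η.2 b⟩
  map_id S := by apply Subtype.ext; simp; rfl
  map_comp f g := by apply Subtype.ext; simp; rfl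

/-!
Every `x : B` receives the unique map `∅_x : b ⟶ x`, and a cocartesian section `S` sends it to
a cocartesian morphism. Hence a vertical morphism `f : S b ⟶ T b` extends uniquely to a vertical
transformation `S ⟶ T`: its component at `x` is the factorization of `f ≫ T(∅_x)` through
`S(∅_x)`. Conversely, for `e` over `b`, cocartesian lifts `e ⟶ σ x` of the maps `∅_x` assemble,
by their universal property, into a cocartesian section `σ`, and `σ b ≅ e` because a cocartesian
lift of an isomorphism is an isomorphism.
-/

open Limits

namespace IsCocartesian

variable {p : E ⥤ B} {x y z : E} {f : p.obj x ⟶ p.obj y} {φ : x ⟶ y}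

lemma hom_ext (hφ : IsCocartesian p f φ) {ψ₁ ψ₂ : y ⟶ z} (hmap : p.map ψ₁ = p.map ψ₂)
    (hcomp : φ ≫ ψ₁ = φ ≫ ψ₂) : ψ₁ = ψ₂ := by
  obtain ⟨ψ, -, hψ⟩ := hφ.2 (p.map ψ₁) (φ ≫ ψ₁) (by rw [p.map_comp, hφ.1])
  exact (hψ ψ₁ ⟨rfl, rfl⟩).trans (hψ ψ₂ ⟨hmap.symm, hcomp⟩).symm

lemma of_comp {g : p.obj y ⟶ p.obj z} {k : p.obj x ⟶ p.obj z} {ψ : y ⟶ z} {χ : x ⟶ z}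
    (hφ : IsCocartesian p f φ) (hχ : IsCocartesian p k χ) (hfac : φ ≫ ψ = χ)
    (hψ : p.map ψ = g) : IsCocartesian p g ψ := by
  subst hfac
  refine ⟨hψ, fun {w} h μ hμ => ?_⟩
  obtain ⟨θ, ⟨hθ, hφψθ⟩, hθ_uniq⟩ :=
    hχ.2 h (φ ≫ μ) (by rw [← hχ.1, p.map_comp, p.map_comp, hμ, hψ, Category.assoc])
  refine ⟨θ, ⟨hθ, ?_⟩, fun θ' hθ' => hθ_uniq θ' ⟨hθ'.1, by rw [Category.assoc, ← hθ'.2]⟩⟩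
  exact hφ.hom_ext (by rw [p.map_comp, hψ, hθ, hμ]) (by rw [hφψθ, Category.assoc])

lemma isIso (hφ : IsCocartesian p f φ) [IsIso f] : IsIso φ := by
  obtain ⟨ψ, ⟨hψ, hφψ⟩, -⟩ := hφ.2 (inv f) (𝟙 x) (by simp)
  refine ⟨ψ, hφψ.symm, hφ.hom_ext ?_ ?_⟩
  · simp [hψ, hφ.1]
  · rw [← Category.assoc, ← hφψ, Category.id_comp, Category.comp_id]

end IsCocartesian

lemma Fib.isIso_of_isIso_val {p : E ⥤ B} {b : B} {x y : Fib p b} (f : x ⟶ y)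
    (hf : IsIso f.1) : IsIso f :=
  ⟨⟨inv f.1, by simp [f.2]⟩, Subtype.ext (IsIso.hom_inv_id f.1),
    Subtype.ext (IsIso.inv_hom_id f.1)⟩

namespace CocartSection

section OfInitial

variable (p : E ⥤ B) (hp : IsOpfibration p) {e : E} (he : IsInitial (p.obj e))

noncomputable def liftObj (x : B) : E := (hp e x (he.to x)).choose

lemma liftObj_over (x : B) : p.obj (liftObj p hp he x) = x :=
  (hp e x (he.to x)).choose_spec.choose

noncomputable def lift (x : B) : e ⟶ liftObj p hp he x :=
  (hp e x (he.to x)).choose_spec.choose_spec.choose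

lemma lift_isCocartesian (x : B) (f : p.obj e ⟶ p.obj (liftObj p hp he x)) :
    IsCocartesian p f (lift p hp he x) := by
  rw [he.hom_ext f (he.to x ≫ eqToHom (liftObj_over p hp he x).symm)]
  exact (hp e x (he.to x)).choose_spec.choose_spec.choose_spec

lemma exists_map {x y : B} (u : x ⟶ y) :
    ∃ ψ : liftObj p hp he x ⟶ liftObj p hp he y,
      p.map ψ = eqToHom (liftObj_over p hp he x) ≫ u ≫ eqToHom (liftObj_over p hp he y).symm ∧
      lift p hp he y = lift p hp he x ≫ ψ :=
  ((lift_isCocartesian p hp he x (he.to _)).2 _ _ (he.hom_ext _ _)).exists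

noncomputable def map {x y : B} (u : x ⟶ y) : liftObj p hp he x ⟶ liftObj p hp he y :=
  (exists_map p hp he u).choose

lemma map_over {x y : B} (u : x ⟶ y) :
    p.map (map p hp he u) =
      eqToHom (liftObj_over p hp he x) ≫ u ≫ eqToHom (liftObj_over p hp he y).symm :=
  (exists_map p hp he u).choose_spec.1

lemma lift_comp_map {x y : B} (u : x ⟶ y) : lift p hp he x ≫ map p hp he u = lift p hp he y :=
  (exists_map p hp he u).choose_spec.2.symm

noncomputable def ofInitialFunctor : B ⥤ E where
  obj := liftObj p hp he
  map := map p hp he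
  map_id x := (lift_isCocartesian p hp he x (he.to _)).hom_ext (by simp [map_over])
    (by rw [lift_comp_map, Category.comp_id])
  map_comp u v := (lift_isCocartesian p hp he _ (he.to _)).hom_ext (by simp [map_over])
    (by rw [lift_comp_map, ← Category.assoc, lift_comp_map, lift_comp_map])

noncomputable def ofInitial : CocartSection p where
  σ := ofInitialFunctor p hp he
  sec := CategoryTheory.Functor.ext (liftObj_over p hp he) fun _ _ u => map_over p hp he u
  cocart u := (lift_isCocartesian p hp he _ (he.to _)).of_comp
    (lift_isCocartesian p hp he _ (he.to _)) (lift_comp_map p hp he u) (map_over p hp he u)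

lemma isIso_lift {b : B} (hb : IsInitial b) : IsIso (lift p hp he b) :=
  (lift_isCocartesian p hp he b
    (he.uniqueUpToIso (hb.ofIso (eqToIso (liftObj_over p hp he b).symm))).hom).isIso

end OfInitial

variable {p : E ⥤ B} {b : B} {S T : CocartSection p}

lemma exists_extension (hb : IsInitial b) (f : S.σ.obj b ⟶ T.σ.obj b)
    (hf : p.map f = eqToHom ((Functor.congr_obj S.sec b).trans (Functor.congr_obj T.sec b).symm))
    (x : B) :
    ∃ ψ : S.σ.obj x ⟶ T.σ.obj x,
      p.map ψ = eqToHom ((Functor.congr_obj S.sec x).trans (Functor.congr_obj T.sec x).symm) ∧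
      S.σ.map (hb.to x) ≫ ψ = f ≫ T.σ.map (hb.to x) := by
  obtain ⟨ψ, ⟨hψ, hfac⟩, -⟩ := (S.cocart (hb.to x)).2 _ (f ≫ T.σ.map (hb.to x))
    (by rw [p.map_comp, hf, (T.cocart (hb.to x)).1]; simp)
  exact ⟨ψ, hψ, hfac.symm⟩

lemma exists_hom_app_eq (hb : IsInitial b) (f : S.σ.obj b ⟶ T.σ.obj b)
    (hf : p.map f = eqToHom ((Functor.congr_obj S.sec b).trans (Functor.congr_obj T.sec b).symm)) :
    ∃ η : S ⟶ T, η.1.app b = f := by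
  choose app app_over app_fac using exists_extension hb f hf
  have naturality {x y : B} (u : x ⟶ y) : S.σ.map u ≫ app y = app x ≫ T.σ.map u := by
    refine (S.cocart (hb.to x)).hom_ext (by simp [app_over, (S.cocart u).1, (T.cocart u).1]) ?_
    rw [← Category.assoc, ← S.σ.map_comp, hb.to_comp, app_fac, reassoc_of% app_fac,
      ← T.σ.map_comp, hb.to_comp]
  refine ⟨⟨⟨app, @naturality⟩, app_over⟩, ?_⟩
  simpa [hb.hom_ext (hb.to b) (𝟙 b)] using app_fac b

end CocartSection

section Evaluation

open CocartSection

variable {p : E ⥤ B} {b : B}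

lemma evalAt_faithful (hb : IsInitial b) : (evalAt p b).Faithful where
  map_injective {S T} η η' h := by
    have hb_app : η.1.app b = η'.1.app b := congrArg Subtype.val h
    refine Subtype.ext (NatTrans.ext (funext fun x => ?_))
    refine (S.cocart (hb.to x)).hom_ext (by rw [η.2 x, η'.2 x]) ?_
    rw [η.1.naturality, η'.1.naturality, hb_app]

lemma evalAt_full (hb : IsInitial b) : (evalAt p b).Full where
  map_surjective {S T} f := by
    obtain ⟨η, hη⟩ := exists_hom_app_eq hb f.1 f.2
    exact ⟨η, Subtype.ext hη⟩

lemma evalAt_essSurj (hp : IsOpfibration p) (hb : IsInitial b) : (evalAt p b).EssSurj where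
  mem_essImage e := by
    let he : IsInitial (p.obj e.1) := hb.ofIso (eqToIso e.2.symm)
    let φ : e ⟶ (evalAt p b).obj (ofInitial p hp he) := ⟨lift p hp he b, he.hom_ext _ _⟩
    have := Fib.isIso_of_isIso_val φ (isIso_lift p hp he hb)
    exact ⟨ofInitial p hp he, ⟨(asIso φ).symm⟩⟩

end Evaluation

/-- If `b` is initial in `B` and `p` is a Grothendieck opfibration, evaluation at `b` is an
equivalence between the category of cocartesian sections of `p` and the fiber of `p` over
`b`. -/
theorem evalAt_isEquivalence_of_initial (p : E ⥤ B) (hp : IsOpfibration p)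
    (b : B) (hb : Limits.IsInitial b) : (evalAt p b).IsEquivalence :=
  { faithful := evalAt_faithful hb
    full := evalAt_full hb
    essSurj := evalAt_essSurj hp hb }
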